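/- Let L ≥ 1 and let n_1, …, n_L be integers with n_l ≥ 4 for all l. Then every piecewise affine function f : ℝ → ℝ with at most 2 + Σ_{l=1}^{L} (n_l − 4) linear regions can be computed exactly by a ReLU network of design (1, n_1, …, n_L, 1). -/

import Mathlib

open scoped BigOperators
open MeasureTheory

noncomputable section

/-- The ReLU activation function. -/
def relu (x : ℝ) : ℝ := max x 0

/-- `f : ℝ^n → ℝ^m` is an affine map. -/
def IsAffineMap {n m : ℕ} (f : (Fin n → ℝ) → Fin m → ℝ) : Prop :=
  ∃ (A : Matrix (Fin m) (Fin n) ℝ) (b : Fin m → ℝ),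
    ∀ x i, f x i = (∑ j, A i j * x j) + b i

/-- `f : ℝ^n → ℝ^m` is an affine map all of whose coefficients have absolute value ≤ c. -/
def IsAffineMapB (c : ℝ) {n m : ℕ} (f : (Fin n → ℝ) → Fin m → ℝ) : Prop :=
  ∃ (A : Matrix (Fin m) (Fin n) ℝ) (b : Fin m → ℝ),
    (∀ i j, |A i j| ≤ c) ∧ (∀ i, |b i| ≤ c) ∧ ∀ x i, f x i = (∑ j, A i j * x j) + b i

/-- `ComputesA ρ n hidden m f` : `f` is computed by a feedforward network with activation
function `ρ`, input dimension `n`, hidden layer widths `hidden` and output dimension `m`. -/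
inductive ComputesA (ρ : ℝ → ℝ) :
    ∀ (n : ℕ), List ℕ → ∀ (m : ℕ), ((Fin n → ℝ) → Fin m → ℝ) → Prop
  | nil {n m : ℕ} (f : (Fin n → ℝ) → Fin m → ℝ) (hf : IsAffineMap f) :
      ComputesA ρ n [] m f
  | cons {n w m : ℕ} {ws : List ℕ} (f₀ : (Fin n → ℝ) → Fin w → ℝ)
      (g : (Fin w → ℝ) → Fin m → ℝ) (hf : IsAffineMap f₀)
      (hg : ComputesA ρ w ws m g) :
      ComputesA ρ n (w :: ws) m (fun x => g (fun i => ρ (f₀ x i)))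

/-- Same as `ComputesA` but all coefficients of all affine maps are bounded by `c`. -/
inductive ComputesAB (ρ : ℝ → ℝ) (c : ℝ) :
    ∀ (n : ℕ), List ℕ → ∀ (m : ℕ), ((Fin n → ℝ) → Fin m → ℝ) → Prop
  | nil {n m : ℕ} (f : (Fin n → ℝ) → Fin m → ℝ) (hf : IsAffineMapB c f) :
      ComputesAB ρ c n [] m f
  | cons {n w m : ℕ} {ws : List ℕ} (f₀ : (Fin n → ℝ) → Fin w → ℝ)
      (g : (Fin w → ℝ) → Fin m → ℝ) (hf : IsAffineMapB c f₀)
      (hg : ComputesAB ρ c w ws m g) :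
      ComputesAB ρ c n (w :: ws) m (fun x => g (fun i => ρ (f₀ x i)))

/-- `f` is computed by a ReLU network of design `(n, hidden…, m)`. -/
def Computes (n : ℕ) (hidden : List ℕ) (m : ℕ) (f : (Fin n → ℝ) → Fin m → ℝ) : Prop :=
  ComputesA relu n hidden m f

/-- `R` is a linear region of `f` : an open connected set on which `f` is affine,
maximal in the sense that `f` is not affine on any strictly larger open set. -/
def IsLinearRegion {n m : ℕ} (f : (Fin n → ℝ) → Fin m → ℝ) (R : Set (Fin n → ℝ)) : Prop :=
  IsOpen R ∧ IsConnected R ∧ (∃ g, IsAffineMap g ∧ Set.EqOn f g R) ∧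
    ∀ R' : Set (Fin n → ℝ), IsOpen R' → R ⊂ R' →
      ¬ ∃ g, IsAffineMap g ∧ Set.EqOn f g R'

/-- The number of linear regions of `f`. -/
def numRegions {n m : ℕ} (f : (Fin n → ℝ) → Fin m → ℝ) : ℕ :=
  {R | IsLinearRegion f R}.ncard

/-- `R(n, hidden…, m)` : the maximal number of linear regions of a function computed by a
ReLU network of design `(n, hidden…, m)`. -/
def maxRegions (n : ℕ) (hidden : List ℕ) (m : ℕ) : ℕ :=
  sSup {k | ∃ f : (Fin n → ℝ) → Fin m → ℝ, Computes n hidden m f ∧ numRegions f = k}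

/-- `f` is piecewise affine: continuous, finitely many linear regions, whose closures cover. -/
def IsPiecewiseAffine {n m : ℕ} (f : (Fin n → ℝ) → Fin m → ℝ) : Prop :=
  Continuous f ∧ {R | IsLinearRegion f R}.Finite ∧
    (⋃ R ∈ {R | IsLinearRegion f R}, closure R) = Set.univ

/-!
A continuous piecewise affine `F : ℝ → ℝ` with `r` linear regions is affine near every point
outside a set `S` of at most `r - 1` points: each point of `S` is the right end of a region,
distinct points give distinct regions, and the region unbounded above is never used. Removing
one kink `c • relu (· - t)` per point of `S` then yields `F x = a * x + b + ∑ c_t * relu (x - t)`.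

A network evaluates such a sum on two channels `(v₀, v₁) = (partial sum, x)`. A hidden layer of
width `k + 4` adds `k + 1` kinks to `v₀`: the pair `relu (±(v₁ - t₀))` realises the kink at `t₀`
and also reconstructs `v₁` for the next layer, and `relu (±v₀)` carries the partial sum. So the
design `(1, n₁, …, n_L, 1)` realises `∑ (n_l - 3) ≥ 1 + ∑ (n_l - 4)` kinks.
-/

open Filter Topology Set
open scoped Matrix

lemma relu_sub_relu_neg (x : ℝ) : relu x - relu (-x) = x := by
  rcases le_total x 0 with h | h <;> simp [relu, h]

@[fun_prop]
lemma continuous_relu : Continuous relu := continuous_id.max continuous_const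

lemma isAffineMap_iff_mulVec {n m : ℕ} {f : (Fin n → ℝ) → Fin m → ℝ} :
    IsAffineMap f ↔ ∃ (A : Matrix (Fin m) (Fin n) ℝ) (b : Fin m → ℝ), ∀ x, f x = A *ᵥ x + b := by
  simp only [IsAffineMap, funext_iff, Pi.add_apply, Matrix.mulVec, dotProduct]

lemma IsAffineMap.comp {n m p : ℕ} {f : (Fin m → ℝ) → Fin p → ℝ}
    {g : (Fin n → ℝ) → Fin m → ℝ} (hf : IsAffineMap f) (hg : IsAffineMap g) :
    IsAffineMap (fun x => f (g x)) := by
  obtain ⟨A, b, hA⟩ := isAffineMap_iff_mulVec.1 hf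
  obtain ⟨B, c, hB⟩ := isAffineMap_iff_mulVec.1 hg
  refine isAffineMap_iff_mulVec.2 ⟨A * B, A *ᵥ c + b, fun x => ?_⟩
  rw [hB, hA, Matrix.mulVec_add, Matrix.mulVec_mulVec, add_assoc]

lemma ComputesA.comp_affine {ρ : ℝ → ℝ} {n n' m : ℕ} {ws : List ℕ}
    {g : (Fin n → ℝ) → Fin m → ℝ} (hg : ComputesA ρ n ws m g)
    {A : (Fin n' → ℝ) → Fin n → ℝ} (hA : IsAffineMap A) :
    ComputesA ρ n' ws m (fun x => g (A x)) := by
  cases hg with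
  | nil f hf => exact .nil _ (hf.comp hA)
  | cons f₀ g hf hg => exact .cons (fun x => f₀ (A x)) g (hf.comp hA) hg

def HasKinks (N : ℕ) (G : ℝ → ℝ) : Prop :=
  ∃ (a b : ℝ) (c t : Fin N → ℝ), ∀ x, G x = a * x + b + ∑ i, c i * relu (x - t i)

lemma HasKinks.exists_eq_add {k N : ℕ} {G : ℝ → ℝ} (hG : HasKinks (k + 1 + N) G) :
    ∃ (c₀ t₀ : ℝ) (c t : Fin k → ℝ) (G' : ℝ → ℝ), HasKinks N G' ∧
      ∀ x, G x = c₀ * relu (x - t₀) + ∑ i, c i * relu (x - t i) + G' x := by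
  obtain ⟨a, b, c, t, hG⟩ := hG
  refine ⟨c (Fin.castAdd N 0), t (Fin.castAdd N 0), fun i => c (Fin.castAdd N i.succ),
    fun i => t (Fin.castAdd N i.succ),
    fun x => a * x + b + ∑ i, c (Fin.natAdd (k + 1) i) * relu (x - t (Fin.natAdd (k + 1) i)),
    ⟨a, b, _, _, fun _ => rfl⟩, fun x => ?_⟩
  rw [hG, Fin.sum_univ_add, Fin.sum_univ_succ]
  ring

lemma ComputesA.cons_kinks {k : ℕ} {ws : List ℕ} {G : ℝ → ℝ}
    (hG : ComputesA relu 2 ws 1 fun v _ => v 0 + G (v 1)) (c₀ t₀ : ℝ) (c t : Fin k → ℝ) :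
    ComputesA relu 2 ((k + 4) :: ws) 1 fun v _ =>
      v 0 + (c₀ * relu (v 1 - t₀) + ∑ i, c i * relu (v 1 - t i) + G (v 1)) := by
  let f₀ : (Fin 2 → ℝ) → Fin (k + 4) → ℝ := fun v =>
    Fin.append (fun i => v 1 - t i) ![v 0, -v 0, v 1 - t₀, -(v 1 - t₀)]
  let R : (Fin (k + 4) → ℝ) → Fin 2 → ℝ := fun u =>
    ![∑ j, Fin.append c ![1, -1, c₀, 0] j * u j, ∑ j, Fin.append 0 ![0, 0, 1, -1] j * u j + t₀]
  have hf₀ : IsAffineMap f₀ := by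
    refine ⟨Fin.append (fun _ => ![0, 1]) ![![1, 0], ![-1, 0], ![0, 1], ![0, -1]],
      Fin.append (fun i => -t i) ![0, 0, -t₀, t₀], fun v i => ?_⟩
    refine Fin.addCases (fun i => ?_) (fun j => ?_) i
    · simp only [f₀, Fin.append_left, Fin.sum_univ_two, Matrix.cons_val_zero, Matrix.cons_val_one,
        Matrix.cons_val_fin_one]
      ring
    · fin_cases j <;>
        simp only [f₀, Fin.append_right, Fin.sum_univ_two, Fin.reduceFinMk, Fin.zero_eta,
          Fin.mk_one, Matrix.cons_val_zero, Matrix.cons_val_one, Matrix.cons_val,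
          Matrix.cons_val_fin_one] <;>
        ring
  have hR : IsAffineMap R :=
    ⟨Matrix.of ![Fin.append c ![1, -1, c₀, 0], Fin.append 0 ![0, 0, 1, -1]], ![0, t₀],
      fun u i => by fin_cases i <;> simp [R]⟩
  have hR₀ : ∀ v, R (fun j => relu (f₀ v j)) 0 =
      v 0 + (c₀ * relu (v 1 - t₀) + ∑ i, c i * relu (v 1 - t i)) := fun v => by
    simp only [R, f₀, Fin.sum_univ_add, Fin.sum_univ_four, Fin.append_left, Fin.append_right,
      Matrix.cons_val_zero, Matrix.cons_val_one, Matrix.cons_val]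
    linear_combination relu_sub_relu_neg (v 0)
  have hR₁ : ∀ v, R (fun j => relu (f₀ v j)) 1 = v 1 := fun v => by
    simp only [R, f₀, Fin.sum_univ_add, Fin.sum_univ_four, Fin.append_left, Fin.append_right,
      Pi.zero_apply, zero_mul, Finset.sum_const_zero, Matrix.cons_val_zero, Matrix.cons_val_one,
      Matrix.cons_val]
    linear_combination relu_sub_relu_neg (v 1 - t₀)
  convert ComputesA.cons f₀ _ hf₀ (hG.comp_affine hR) using 1
  funext v _
  rw [hR₀, hR₁]
  ring

lemma computesA_of_hasKinks {ws : List ℕ} (hws : ∀ w ∈ ws, 4 ≤ w) {G : ℝ → ℝ}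
    (hG : HasKinks (ws.map (· - 3)).sum G) :
    ComputesA relu 2 ws 1 fun v _ => v 0 + G (v 1) := by
  induction ws generalizing G with
  | nil =>
    obtain ⟨a, b, c, t, hG⟩ : HasKinks 0 G := hG
    refine .nil _ ⟨Matrix.of fun _ => ![1, a], fun _ => b, fun v i => ?_⟩
    simp only [hG, Finset.univ_eq_empty, Finset.sum_empty, Matrix.of_apply, Fin.sum_univ_two,
      Matrix.cons_val_zero, Matrix.cons_val_one, Matrix.cons_val_fin_one]
    ring
  | cons w ws ih =>
    obtain ⟨k, rfl⟩ := Nat.exists_eq_add_of_le' (hws w List.mem_cons_self)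
    have hN : (((k + 4) :: ws).map (· - 3)).sum = k + 1 + (ws.map (· - 3)).sum := by
      simp only [List.map_cons, List.sum_cons]
      omega
    rw [hN] at hG
    obtain ⟨c₀, t₀, c, t, G', hG', hGG'⟩ := hG.exists_eq_add
    convert (ih (fun w hw => hws w (List.mem_cons_of_mem _ hw)) hG').cons_kinks c₀ t₀ c t
      using 4 with v
    exact hGG' (v 1)

def LocallyAffineAt (F : ℝ → ℝ) (x : ℝ) : Prop :=
  ∃ a b : ℝ, ∀ᶠ y in 𝓝 x, F y = a * y + b

lemma LocallyAffineAt.sub_mul {F G : ℝ → ℝ} {x : ℝ} (hF : LocallyAffineAt F x)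
    (hG : LocallyAffineAt G x) (c : ℝ) : LocallyAffineAt (fun y => F y - c * G y) x := by
  obtain ⟨a, b, hF⟩ := hF
  obtain ⟨a', b', hG⟩ := hG
  refine ⟨a - c * a', b - c * b', ?_⟩
  filter_upwards [hF, hG] with y hFy hGy
  rw [hFy, hGy]
  ring

lemma locallyAffineAt_relu_sub {t x : ℝ} (hx : x ≠ t) :
    LocallyAffineAt (fun y => relu (y - t)) x := by
  rcases hx.lt_or_gt with hx | hx
  · refine ⟨0, 0, ?_⟩
    filter_upwards [Iio_mem_nhds hx] with y hy
    rw [relu, max_eq_right (by linarith [mem_Iio.1 hy])]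
    ring
  · refine ⟨1, -t, ?_⟩
    filter_upwards [Ioi_mem_nhds hx] with y hy
    rw [relu, max_eq_left (by linarith [mem_Ioi.1 hy])]
    ring

lemma eq_and_eq_of_eventually_affine_eq {a b a' b' x : ℝ}
    (h : ∀ᶠ y in 𝓝 x, a * y + b = a' * y + b') : a = a' ∧ b = b' := by
  obtain ⟨ε, hε, hball⟩ := Metric.eventually_nhds_iff.mp h
  have hx : a * x + b = a' * x + b' := hball (by simpa using hε)
  have hxε : a * (x + ε / 2) + b = a' * (x + ε / 2) + b' :=
    hball (by rw [Real.dist_eq, add_sub_cancel_left, abs_of_pos (by positivity)]; linarith)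
  have ha : a = a' := by
    have : a * (ε / 2) = a' * (ε / 2) := by linarith
    exact mul_right_cancel₀ (by positivity) this
  exact ⟨ha, by subst ha; linarith⟩

lemma IsPreconnected.exists_eq_affine {V : Set ℝ} (hV : IsPreconnected V) {F : ℝ → ℝ}
    (hF : ∀ x ∈ V, LocallyAffineAt F x) : ∃ a b : ℝ, ∀ x ∈ V, F x = a * x + b := by
  rcases V.eq_empty_or_nonempty with rfl | ⟨x₀, hx₀⟩
  · exact ⟨0, 0, by simp⟩
  obtain ⟨a, b, hab⟩ := hF x₀ hx₀
  let U (p : ℝ × ℝ) : Set ℝ := {x | ∀ᶠ y in 𝓝 x, F y = p.1 * y + p.2}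
  have hU : ∀ p, IsOpen (U p) := fun _ => isOpen_setOfPred_eventually_nhds
  have hdisj : Disjoint (U (a, b)) (⋃ p ∈ ({(a, b)}ᶜ : Set (ℝ × ℝ)), U p) := by
    refine Set.disjoint_left.2 fun x hx hx' => ?_
    obtain ⟨p, hp, hpx⟩ := Set.mem_iUnion₂.1 hx'
    obtain ⟨h₁, h₂⟩ :=
      eq_and_eq_of_eventually_affine_eq ((hx.and hpx).mono fun y hy => hy.1 ▸ hy.2)
    exact hp (Prod.ext h₁.symm h₂.symm)
  have hcover : V ⊆ U (a, b) ∪ ⋃ p ∈ ({(a, b)}ᶜ : Set (ℝ × ℝ)), U p := by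
    intro x hx
    obtain ⟨a', b', hx⟩ := hF x hx
    by_cases hp : (a', b') = (a, b)
    · exact Or.inl (hp ▸ hx)
    · exact Or.inr (Set.mem_biUnion hp hx)
  have hVU := hV.subset_left_of_subset_union (hU _) (isOpen_biUnion fun p _ => hU p) hdisj
    hcover ⟨x₀, hx₀, hab⟩
  exact ⟨a, b, fun x hx => (hVU hx).self_of_nhds⟩

lemma Continuous.locallyAffineAt_sub_mul_relu {F : ℝ → ℝ} (hF : Continuous F)
    {t ε a₁ b₁ a₂ b₂ : ℝ} (hε : 0 < ε) (h₁ : ∀ y ∈ Ioo (t - ε) t, F y = a₁ * y + b₁)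
    (h₂ : ∀ y ∈ Ioo t (t + ε), F y = a₂ * y + b₂) :
    LocallyAffineAt (fun y => F y - (a₂ - a₁) * relu (y - t)) t := by
  have ht₁ : F t = a₁ * t + b₁ := Set.EqOn.closure h₁ hF (by fun_prop)
    (by rw [closure_Ioo (by linarith)]; exact ⟨by linarith, le_rfl⟩)
  have ht₂ : F t = a₂ * t + b₂ := Set.EqOn.closure h₂ hF (by fun_prop)
    (by rw [closure_Ioo (by linarith)]; exact ⟨le_rfl, by linarith⟩)
  refine ⟨a₁, b₁, ?_⟩
  filter_upwards [Ioo_mem_nhds (by linarith : t - ε < t) (by linarith : t < t + ε)] with y hy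
  rcases lt_trichotomy y t with hyt | rfl | hyt
  · rw [h₁ y ⟨hy.1, hyt⟩, relu, max_eq_right (by linarith)]
    ring
  · rw [ht₁, sub_self, relu, max_self]
    ring
  · rw [h₂ y ⟨hyt, hy.2⟩, relu, max_eq_left (by linarith)]
    linear_combination ht₁ - ht₂

theorem Continuous.hasKinks {F : ℝ → ℝ} (hF : Continuous F) {S : Finset ℝ}
    (hS : ∀ x ∉ S, LocallyAffineAt F x) {N : ℕ} (hN : S.card ≤ N) : HasKinks N F := by
  induction S using Finset.induction_on generalizing F N with
  | empty =>
    obtain ⟨a, b, hab⟩ := isPreconnected_univ.exists_eq_affine fun x _ => hS x (by simp)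
    exact ⟨a, b, 0, 0, fun x => by simp [hab x trivial]⟩
  | insert t S ht ih =>
    rw [Finset.card_insert_of_notMem ht] at hN
    obtain ⟨N, rfl⟩ := Nat.exists_eq_succ_of_ne_zero (by omega : N ≠ 0)
    obtain ⟨ε, hε, hball⟩ := Metric.isOpen_iff.1 S.finite_toSet.isClosed.isOpen_compl t ht
    have hS' : ∀ y ∈ Ioo (t - ε) (t + ε), y ≠ t → LocallyAffineAt F y := fun y hy hyt =>
      hS y (by simpa [hyt] using hball (by rwa [Real.ball_eq_Ioo]))
    obtain ⟨a₁, b₁, h₁⟩ := (isPreconnected_Ioo (a := t - ε) (b := t)).exists_eq_affine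
      fun y hy => hS' y ⟨hy.1, by linarith [hy.2]⟩ hy.2.ne
    obtain ⟨a₂, b₂, h₂⟩ := (isPreconnected_Ioo (a := t) (b := t + ε)).exists_eq_affine
      fun y hy => hS' y ⟨by linarith [hy.1], hy.2⟩ hy.1.ne'
    have hH : ∀ x ∉ S, LocallyAffineAt (fun y => F y - (a₂ - a₁) * relu (y - t)) x := by
      intro x hx
      rcases eq_or_ne x t with rfl | hxt
      · exact hF.locallyAffineAt_sub_mul_relu hε h₁ h₂
      · exact (hS x (by simp [hx, hxt])).sub_mul (locallyAffineAt_relu_sub hxt) _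
    obtain ⟨a, b, c, τ, hrep⟩ := ih (by fun_prop) hH (N := N) (by omega)
    refine ⟨a, b, Fin.cons (a₂ - a₁) c, Fin.cons t τ, fun x => ?_⟩
    rw [Fin.sum_univ_succ]
    simp only [Fin.cons_zero, Fin.cons_succ]
    linarith [hrep x]

lemma exists_subset_Iio_mem_closure {𝓡 : Set (Set ℝ)} (hfin : 𝓡.Finite)
    (hconn : ∀ Q ∈ 𝓡, IsPreconnected Q) (hcover : ⋃ Q ∈ 𝓡, closure Q = univ) {s : ℝ}
    (hs : s ∉ ⋃₀ 𝓡) : ∃ Q ∈ 𝓡, Q ⊆ Iio s ∧ s ∈ closure Q := by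
  have hIio : Iio s ⊆ closure (⋃ Q ∈ 𝓡, Iio s ∩ Q) := fun y hy => by
    obtain ⟨Q, hQ, hyQ⟩ := mem_iUnion₂.1 (hcover ▸ mem_univ y : y ∈ ⋃ Q ∈ 𝓡, closure Q)
    rw [hfin.closure_biUnion]
    exact mem_iUnion₂.2 ⟨Q, hQ, isOpen_Iio.inter_closure ⟨hy, hyQ⟩⟩
  have hs' := closure_minimal hIio isClosed_closure (by simp : s ∈ closure (Iio s))
  rw [hfin.closure_biUnion] at hs'
  obtain ⟨Q, hQ, hsQ⟩ := mem_iUnion₂.1 hs'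
  obtain ⟨z, hzs, hzQ⟩ := closure_nonempty_iff.1 ⟨s, hsQ⟩
  have hQs : Q ⊆ Iio s := fun w hw => lt_of_not_ge fun hsw =>
    hs ⟨Q, hQ, (hconn Q hQ).ordConnected.out hzQ hw ⟨le_of_lt hzs, hsw⟩⟩
  exact ⟨Q, hQ, hQs, closure_mono inter_subset_right hsQ⟩

theorem finite_compl_sUnion_and_ncard_lt {𝓡 : Set (Set ℝ)} (hfin : 𝓡.Finite)
    (hconn : ∀ Q ∈ 𝓡, IsPreconnected Q) (hcover : ⋃ Q ∈ 𝓡, closure Q = univ) :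
    (⋃₀ 𝓡)ᶜ.Finite ∧ (⋃₀ 𝓡)ᶜ.ncard < 𝓡.ncard := by
  choose! φ hφ𝓡 hφIio hφcl using
    fun s (hs : s ∈ (⋃₀ 𝓡)ᶜ) => exists_subset_Iio_mem_closure hfin hconn hcover hs
  obtain ⟨Qtop, hQtop, hunbdd⟩ : ∃ Q ∈ 𝓡, ¬ BddAbove Q := by
    by_contra! hbdd
    have : BddAbove (⋃ Q ∈ 𝓡, closure Q) :=
      hfin.bddAbove_biUnion.2 fun Q hQ => (hbdd Q hQ).closure
    exact not_bddAbove_univ (hcover ▸ this)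
  have hmaps : MapsTo φ (⋃₀ 𝓡)ᶜ (𝓡 \ {Qtop}) := fun s hs =>
    ⟨hφ𝓡 s hs, fun h => hunbdd (h ▸ bddAbove_Iio.mono (hφIio s hs))⟩
  have hle : ∀ s ∈ (⋃₀ 𝓡)ᶜ, ∀ s' ∈ (⋃₀ 𝓡)ᶜ, φ s = φ s' → s' ≤ s := fun s hs s' hs' h => by
    simpa using closure_mono (hφIio s hs) (h ▸ hφcl s' hs')
  have hinj : InjOn φ (⋃₀ 𝓡)ᶜ := fun s hs s' hs' h =>
    le_antisymm (hle s' hs' s hs h.symm) (hle s hs s' hs' h)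
  refine ⟨Finite.of_finite_image (hfin.sdiff.subset hmaps.image_subset) hinj, ?_⟩
  calc (⋃₀ 𝓡)ᶜ.ncard
      ≤ (𝓡 \ {Qtop}).ncard := ncard_le_ncard_of_injOn φ hmaps hinj hfin.sdiff
    _ < 𝓡.ncard := ncard_sdiff_singleton_lt_of_mem hQtop hfin

lemma IsPiecewiseAffine.exists_finset_locallyAffineAt {f : (Fin 1 → ℝ) → Fin 1 → ℝ}
    (hf : IsPiecewiseAffine f) : ∃ S : Finset ℝ, S.card < numRegions f ∧
      ∀ x ∉ S, LocallyAffineAt (fun y => f (fun _ => y) 0) x := by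
  obtain ⟨-, hfin, hcover⟩ := hf
  let e := Homeomorph.funUnique (Fin 1) ℝ
  let 𝓡 := (e '' ·) '' {R | IsLinearRegion f R}
  have hcover' : ⋃ Q ∈ 𝓡, closure Q = univ := by
    simp only [𝓡, biUnion_image, ← e.image_closure, ← image_iUnion₂, hcover, image_univ,
      e.surjective.range_eq]
  have hconn : ∀ Q ∈ 𝓡, IsPreconnected Q := by
    rintro _ ⟨R, hR, rfl⟩
    exact hR.2.1.isPreconnected.image _ e.continuous.continuousOn
  obtain ⟨hS, hcard⟩ := finite_compl_sUnion_and_ncard_lt (hfin.image _) hconn hcover'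
  refine ⟨hS.toFinset, ?_, fun x hx => ?_⟩
  · rwa [← ncard_eq_toFinset_card _ hS, numRegions,
      ← ncard_image_of_injective _ (image_injective.2 e.injective)]
  · obtain ⟨_, ⟨R, hR, rfl⟩, hxR⟩ : x ∈ ⋃₀ 𝓡 :=
      not_not.1 fun h => hx (hS.mem_toFinset.2 h)
    obtain ⟨g, ⟨A, b, hg⟩, hfg⟩ := hR.2.2.1
    refine ⟨A 0 0, b 0, ?_⟩
    filter_upwards [(e.isOpenMap R hR.1).mem_nhds hxR] with y ⟨z, hz, hzy⟩
    subst hzy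
    have : (fun _ => e z) = z := e.symm_apply_apply z
    rw [this, hfg hz, hg, Fin.sum_univ_one]
    rfl

lemma computes_of_hasKinks_univariate {ws : List ℕ} (hws : ∀ w ∈ ws, 4 ≤ w)
    {f : (Fin 1 → ℝ) → Fin 1 → ℝ}
    (hf : HasKinks (ws.map (· - 3)).sum fun y => f (fun _ => y) 0) :
    Computes 1 ws 1 f := by
  have hnet := (computesA_of_hasKinks hws hf).comp_affine (A := fun x => ![0, x 0])
    ⟨![![0], ![1]], 0, fun x i => by fin_cases i <;> simp⟩
  have hfx : (fun x _ => ![0, x 0] 0 + f (fun _ => ![0, x 0] 1) 0) = f := by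
    funext x i
    rw [Subsingleton.elim i 0]
    simp only [Matrix.cons_val_zero, Matrix.cons_val_one, zero_add]
    exact congrArg (f · 0) (funext fun j => congrArg x (Subsingleton.elim 0 j))
  exact hfx ▸ hnet

/-- if `n_l ≥ 4` for all `l`, every piecewise affine `f : ℝ → ℝ` with at most
`2 + ∑ (n_l - 4)` linear regions is computed by a ReLU network of design `(1, n₁, …, n_L, 1)`. -/
theorem stmt_9 (L : ℕ) (hL : 1 ≤ L) (n : Fin L → ℕ) (hn : ∀ l, 4 ≤ n l)
    (f : (Fin 1 → ℝ) → Fin 1 → ℝ) (hf : IsPiecewiseAffine f)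
    (hreg : numRegions f ≤ 2 + ∑ l, (n l - 4)) :
    Computes 1 (List.ofFn n) 1 f := by
  obtain ⟨S, hS, hloc⟩ := hf.exists_finset_locallyAffineAt
  have hcap : S.card ≤ ((List.ofFn n).map (· - 3)).sum := by
    have : ∑ l, (n l - 3) = ∑ l, (n l - 4) + L :=
      calc ∑ l, (n l - 3) = ∑ l, (n l - 4 + 1) :=
            Finset.sum_congr rfl fun l _ => by have := hn l; omega
        _ = ∑ l, (n l - 4) + L := by simp [Finset.sum_add_distrib]
    rw [List.map_ofFn, List.sum_ofFn]
    simp only [Function.comp_def]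
    omega
  have hF : Continuous fun y => f (fun _ => y) 0 :=
    (continuous_apply 0).comp (hf.1.comp (continuous_pi fun _ => continuous_id))
  exact computes_of_hasKinks_univariate (List.forall_mem_ofFn_iff.2 hn) (hF.hasKinks hloc hcap)
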